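/- Let W be a finite-dimensional real vector space and A_W an algebraic curvature tensor on W. On V := W ⊕ W* define the nondegenerate symmetric bilinear form ⟨(w₁,ξ₁),(w₂,ξ₂)⟩ := ξ₁(w₂) + ξ₂(w₁) and the algebraic curvature tensor A((w₁,ξ₁),(w₂,ξ₂),(w₃,ξ₃),(w₄,ξ₄)) := A_W(w₁,w₂,w₃,w₄). Then 𝔐 = (V,⟨·,·⟩,A) is 2-step skew-curvature nilpotent: 𝒜(x₁,x₂)∘𝒜(x₃,x₄) = 0 for all x₁, x₂, x₃, x₄ ∈ V. -/

import Mathlib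

noncomputable section

/-- The Jacobi operator `J(x) : y ↦ 𝒜(y,x)x` of a (tri)linear curvature operator `𝒜`. -/
def jacobiOp {V : Type*} [AddCommGroup V] [Module ℝ V]
    (Aop : V →ₗ[ℝ] V →ₗ[ℝ] V →ₗ[ℝ] V) (x : V) : V →ₗ[ℝ] V where
  toFun y := Aop y x x
  map_add' y z := by simp
  map_smul' c y := by simp

/-- The polarized Jacobi operator `J(x,y) : z ↦ ½(𝒜(z,x)y + 𝒜(z,y)x)`. -/
def jacobiPol {V : Type*} [AddCommGroup V] [Module ℝ V]
    (Aop : V →ₗ[ℝ] V →ₗ[ℝ] V →ₗ[ℝ] V) (x y : V) : V →ₗ[ℝ] V where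
  toFun z := (1/2 : ℝ) • (Aop z x y + Aop z y x)
  map_add' a b := by simp [smul_add]; abel
  map_smul' c a := by simp [smul_add, smul_comm c]

/-!
In the dual extension the curvature pairs nontrivially only against the `W`-part of a vector.
Testing `𝒜(p,q)r` against `(0,φ)` shows that `𝒜(p,q)r` lies in `W*`; testing it against
`(w,0)` shows that `𝒜(p,q)` annihilates `W*`. Hence any composite `𝒜(x₁,x₂) ∘ 𝒜(x₃,x₄)` vanishes.
-/

open Module

namespace DualExtension

variable {R W : Type*} [CommRing R] [AddCommGroup W] [Module R W]
  {AW : W →ₗ[R] W →ₗ[R] W →ₗ[R] W →ₗ[R] R}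
  {Aop : (W × Dual R W) →ₗ[R] (W × Dual R W) →ₗ[R] (W × Dual R W) →ₗ[R] (W × Dual R W)}

theorem fst_curvatureOp_eq_zero [Projective R W]
    (hchar : ∀ p q r s : W × Dual R W,
      (Aop p q r).2 s.1 + s.2 (Aop p q r).1 = AW p.1 q.1 r.1 s.1)
    (p q r : W × Dual R W) : (Aop p q r).1 = 0 := by
  rw [← forall_dual_apply_eq_zero_iff R]
  intro φ
  simpa using hchar p q r (0, φ)

theorem curvatureOp_eq_zero_of_fst_eq_zero [Projective R W]
    (hchar : ∀ p q r s : W × Dual R W,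
      (Aop p q r).2 s.1 + s.2 (Aop p q r).1 = AW p.1 q.1 r.1 s.1)
    (p q : W × Dual R W) {r : W × Dual R W} (hr : r.1 = 0) : Aop p q r = 0 := by
  refine Prod.ext (fst_curvatureOp_eq_zero hchar p q r) (LinearMap.ext fun w => ?_)
  simpa [hr] using hchar p q r (w, 0)

end DualExtension

theorem dual_extension_two_step_skew_nilpotent
    {W : Type*} [AddCommGroup W] [Module ℝ W]
    -- an algebraic curvature tensor A_W on W
    (AW : W →ₗ[ℝ] W →ₗ[ℝ] W →ₗ[ℝ] W →ₗ[ℝ] ℝ)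
    -- the curvature operator 𝒜 of A on V = W ⊕ W*, characterized by
    -- ⟨𝒜(p,q)r, s⟩ = A_W(p₁,q₁,r₁,s₁), where ⟨(w₁,ξ₁),(w₂,ξ₂)⟩ = ξ₁(w₂) + ξ₂(w₁)
    (Aop : (W × Module.Dual ℝ W) →ₗ[ℝ] (W × Module.Dual ℝ W) →ₗ[ℝ]
      (W × Module.Dual ℝ W) →ₗ[ℝ] (W × Module.Dual ℝ W))
    (hchar : ∀ p q r s : W × Module.Dual ℝ W,
      (Aop p q r).2 s.1 + s.2 (Aop p q r).1 = AW p.1 q.1 r.1 s.1) :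
    ∀ x₁ x₂ x₃ x₄ : W × Module.Dual ℝ W, Aop x₁ x₂ ∘ₗ Aop x₃ x₄ = 0 := by
  intro x₁ x₂ x₃ x₄
  exact LinearMap.ext fun r => DualExtension.curvatureOp_eq_zero_of_fst_eq_zero hchar x₁ x₂
    (DualExtension.fst_curvatureOp_eq_zero hchar x₃ x₄ r)
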